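/- Derivative-free OptimIST setup: let f : ℝⁿ → ℝ be differentiable with ∇f Lipschitz continuous on ℝⁿ with constant L ∈ (0,∞) and f bounded below with f_* = inf f; let η > 0, ζ > 0; let {x_k} ⊂ ℝⁿ, {ĝ_k} ⊂ ℝⁿ, {δ_k} ⊂ (0,∞) with f_k = f(x_k), g_k = ∇f(x_k), satisfying for every k ≥ 0: (i) f_{k+1} ≤ f_k; (ii) f_{k+1} ≤ max{f_k − ηδ_k², f(x_k − δ_k ĝ_k/‖ĝ_k‖)}, where ĝ_k/‖ĝ_k‖ is taken to be 0 if ĝ_k = 0; (iii) ‖ĝ_k − g_k‖ ≤ ζδ_k; (iv) δ_{k+1} = 2δ_k if both ‖ĝ_k‖ ≥ ηδ_k and f_{k+1} ≤ f_k − ηδ_k², and δ_{k+1} = δ_k/2 otherwise. Define K = {k ∈ ℕ : ‖ĝ_k‖ ≥ ηδ_k and f_{k+1} ≤ f_k − ηδ_k²}, μ = 2/(L + 2η + 4ζ), and, assuming g₀ ≠ 0, ν = min{δ₀/‖g₀‖, μ/2}. Then for every k ∈ K, f_k − f_{k+1} ≥ η δ_k² ≥ η ν² (min{‖g_ℓ‖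 : 0 ≤ ℓ ≤ k})². -/

import Mathlib

/-!
If `δ k ≤ μ ‖∇f (x k)‖`, the descent lemma for the `L`-smooth `f` and the accuracy
`‖ĝ k - ∇f (x k)‖ ≤ ζ δ k` show that the step of length `δ k` along `-ĝ k` decreases `f` by at
least `η δ k ²`, so iteration `k` is successful and `δ` doubles. Hence `δ` is halved only when
`δ k > μ ‖∇f (x k)‖`, and induction gives `δ k ≥ ν min_{ℓ ≤ k} ‖∇f (x ℓ)‖`.
-/

open scoped RealInnerProductSpace

section Smooth

variable {E : Type*} [NormedAddCommGroup E] [InnerProductSpace ℝ E] [CompleteSpace E]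
  {f : E → ℝ} {L : ℝ}

theorem hasDerivAt_comp_add_smul (hf : Differentiable ℝ f) (x v : E) (t : ℝ) :
    HasDerivAt (fun s : ℝ => f (x + s • v)) ⟪gradient f (x + t • v), v⟫ t := by
  have hline : HasDerivAt (fun s : ℝ => x + s • v) v t := by
    simpa using ((hasDerivAt_id t).smul_const v).const_add x
  exact (hf _).hasGradientAt.hasFDerivAt.comp_hasDerivAt t hline

theorem le_add_inner_gradient_add_of_lipschitz_gradient (hf : Differentiable ℝ f)
    (hlip : ∀ y z, ‖gradient f y - gradient f z‖ ≤ L * ‖y - z‖) (x v : E) :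
    f (x + v) ≤ f x + ⟪gradient f x, v⟫ + L / 2 * ‖v‖ ^ 2 := by
  -- the gap between `f` and its quadratic model along the segment is antitone on `t ≥ 0`
  set φ : ℝ → ℝ := fun t => f (x + t • v) - t * ⟪gradient f x, v⟫ - L / 2 * t ^ 2 * ‖v‖ ^ 2
  have hφ : ∀ t, HasDerivAt φ (⟪gradient f (x + t • v) - gradient f x, v⟫ - L * t * ‖v‖ ^ 2) t := by
    intro t
    have := ((hasDerivAt_comp_add_smul hf x v t).sub ((hasDerivAt_id t).mul_const
      ⟪gradient f x, v⟫)).sub (((hasDerivAt_pow 2 t).const_mul (L / 2)).mul_const (‖v‖ ^ 2))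
    refine this.congr_deriv ?_
    rw [inner_sub_left]
    push_cast
    ring
  have hφ' : ∀ t ∈ interior (Set.Ici (0 : ℝ)),
      ⟪gradient f (x + t • v) - gradient f x, v⟫ - L * t * ‖v‖ ^ 2 ≤ 0 := by
    intro t ht
    rw [interior_Ici, Set.mem_Ioi] at ht
    rw [sub_nonpos]
    calc ⟪gradient f (x + t • v) - gradient f x, v⟫
        ≤ ‖gradient f (x + t • v) - gradient f x‖ * ‖v‖ := real_inner_le_norm _ _
      _ ≤ L * ‖x + t • v - x‖ * ‖v‖ := by gcongr; exact hlip _ _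
      _ = L * t * ‖v‖ ^ 2 := by
        rw [add_sub_cancel_left, norm_smul, Real.norm_of_nonneg ht.le]; ring
  have hanti := antitoneOn_of_hasDerivWithinAt_nonpos (convex_Ici 0)
    (fun t _ => (hφ t).continuousAt.continuousWithinAt) (fun t _ => (hφ t).hasDerivWithinAt) hφ'
    Set.self_mem_Ici (Set.mem_Ici.2 zero_le_one) zero_le_one
  simp only [φ, zero_smul, one_smul, add_zero] at hanti
  linarith

theorem le_sub_mul_norm_add_of_lipschitz_gradient (hf : Differentiable ℝ f)
    (hlip : ∀ y z, ‖gradient f y - gradient f z‖ ≤ L * ‖y - z‖) (x d : E) {δ : ℝ}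
    (hδ : 0 ≤ δ) (hd : d ≠ 0) :
    f (x - (δ / ‖d‖) • d) ≤ f x - δ * ‖d‖ + δ * ‖d - gradient f x‖ + L / 2 * δ ^ 2 := by
  have hd' : 0 < ‖d‖ := norm_pos_iff.2 hd
  have hinner : ‖d‖ ^ 2 - ‖d - gradient f x‖ * ‖d‖ ≤ ⟪gradient f x, d⟫ := by
    have := real_inner_le_norm (d - gradient f x) d
    rw [inner_sub_left, real_inner_self_eq_norm_sq] at this
    linarith
  have hnorm : ‖-((δ / ‖d‖) • d)‖ = δ := by
    rw [norm_neg, norm_smul, Real.norm_of_nonneg (by positivity), div_mul_cancel₀ _ hd'.ne']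
  have hdescent := le_add_inner_gradient_add_of_lipschitz_gradient hf hlip x (-((δ / ‖d‖) • d))
  rw [← sub_eq_add_neg, hnorm, inner_neg_right, real_inner_smul_right] at hdescent
  have hslope : δ * ‖d‖ - δ * ‖d - gradient f x‖ ≤ δ / ‖d‖ * ⟪gradient f x, d⟫ :=
    calc δ * ‖d‖ - δ * ‖d - gradient f x‖
        = δ / ‖d‖ * (‖d‖ ^ 2 - ‖d - gradient f x‖ * ‖d‖) := by field_simp
      _ ≤ δ / ‖d‖ * ⟪gradient f x, d⟫ := by gcongr
  linarith

theorem successful_of_le_mul_norm_gradient (hf : Differentiable ℝ f)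
    (hlip : ∀ y z, ‖gradient f y - gradient f z‖ ≤ L * ‖y - z‖) (hL : 0 ≤ L) {η ζ δ : ℝ}
    (hη : 0 < η) (hζ : 0 ≤ ζ) (hδ : 0 < δ) {x x' g : E} (hacc : ‖g - gradient f x‖ ≤ ζ * δ)
    (hsd : f x' ≤ max (f x - η * δ ^ 2) (f (x - (δ / ‖g‖) • g)))
    (hsmall : δ ≤ 2 / (L + 2 * η + 4 * ζ) * ‖gradient f x‖) :
    η * δ ≤ ‖g‖ ∧ f x' ≤ f x - η * δ ^ 2 := by
  rw [div_mul_eq_mul_div, le_div_iff₀ (by positivity)] at hsmall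
  have hg : (L / 2 + η + ζ) * δ ≤ ‖g‖ := by
    linarith [norm_sub_norm_le (gradient f x) g, norm_sub_rev g (gradient f x)]
  have hg0 : g ≠ 0 := norm_pos_iff.1 (lt_of_lt_of_le (by positivity) hg)
  refine ⟨by nlinarith, hsd.trans (max_le le_rfl ?_)⟩
  have hdecr := le_sub_mul_norm_add_of_lipschitz_gradient hf hlip x g hδ.le hg0
  nlinarith [mul_le_mul_of_nonneg_left hg hδ.le, mul_le_mul_of_nonneg_left hacc hδ.le]

end Smooth

open Finset in
theorem mul_inf'_range_le_of_step_rule {g δ : ℕ → ℝ} {μ ν : ℝ} (hg : ∀ k, 0 ≤ g k)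
    (hν : 0 ≤ ν) (hνμ : ν ≤ μ / 2) (h0 : ν * g 0 ≤ δ 0)
    (hgrow : ∀ k, δ k ≤ μ * g k → δ k ≤ δ (k + 1)) (hhalve : ∀ k, δ k / 2 ≤ δ (k + 1))
    (k : ℕ) : ν * (range (k + 1)).inf' nonempty_range_add_one g ≤ δ k := by
  induction k with
  | zero => simpa using h0
  | succ k ih =>
    by_cases h : δ k ≤ μ * g k
    · calc ν * (range (k + 2)).inf' nonempty_range_add_one g
          ≤ ν * (range (k + 1)).inf' nonempty_range_add_one g := by
            gcongr ν * ?_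
            exact inf'_mono _ (range_subset_range.2 (by omega)) _
        _ ≤ δ (k + 1) := ih.trans (hgrow k h)
    · calc ν * (range (k + 2)).inf' nonempty_range_add_one g
          ≤ ν * g k := by gcongr; exact inf'_le _ (by simp)
        _ ≤ μ / 2 * g k := by gcongr; exact hg k
        _ ≤ δ (k + 1) := by linarith [hhalve k]

/-- Inequality (3.5): at every successful iteration `k` of the derivative-free OptimIST
framework, `f (x k) - f (x (k+1)) ≥ η δ k ^ 2 ≥ η ν² (min {‖∇f (x ℓ)‖ : ℓ ≤ k})²`, where
`ν = min (δ 0 / ‖∇f (x 0)‖) (μ / 2)` and `μ = 2/(L + 2η + 4ζ)`. -/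
theorem successful_iteration_decrease {n : ℕ}
    (f : EuclideanSpace ℝ (Fin n) → ℝ)
    (hdiff : Differentiable ℝ f)
    (L : ℝ) (hL : 0 < L)
    (hlip : ∀ y z, ‖gradient f y - gradient f z‖ ≤ L * ‖y - z‖)
    (η ζ : ℝ) (hη : 0 < η) (hζ : 0 < ζ)
    (x ghat : ℕ → EuclideanSpace ℝ (Fin n)) (δ : ℕ → ℝ) (hδ : ∀ k, 0 < δ k)
    (hsd : ∀ k, f (x (k + 1)) ≤
      max (f (x k) - η * δ k ^ 2) (f (x k - (δ k / ‖ghat k‖) • ghat k)))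
    (hacc : ∀ k, ‖ghat k - gradient f (x k)‖ ≤ ζ * δ k)
    (hupd : ∀ k,
      ((η * δ k ≤ ‖ghat k‖ ∧ f (x (k + 1)) ≤ f (x k) - η * δ k ^ 2) → δ (k + 1) = 2 * δ k) ∧
      (¬(η * δ k ≤ ‖ghat k‖ ∧ f (x (k + 1)) ≤ f (x k) - η * δ k ^ 2) → δ (k + 1) = δ k / 2))
    (μ ν : ℝ) (hμ : μ = 2 / (L + 2 * η + 4 * ζ))
    (hν : ν = min (δ 0 / ‖gradient f (x 0)‖) (μ / 2)) :
    ∀ k, (η * δ k ≤ ‖ghat k‖ ∧ f (x (k + 1)) ≤ f (x k) - η * δ k ^ 2) →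
      η * δ k ^ 2 ≤ f (x k) - f (x (k + 1)) ∧
      η * ν ^ 2 * ((Finset.range (k + 1)).inf' (by simp)
        (fun ℓ => ‖gradient f (x ℓ)‖)) ^ 2 ≤ η * δ k ^ 2 := by
  intro k hk
  set m := (Finset.range (k + 1)).inf' (by simp) (fun ℓ => ‖gradient f (x ℓ)‖)
  have hν0 : 0 ≤ ν := hν ▸ le_min (div_nonneg (hδ 0).le (norm_nonneg _)) (hμ ▸ by positivity)
  have hstep : ν * m ≤ δ k := by
    refine mul_inf'_range_le_of_step_rule (fun _ => norm_nonneg _) hν0 (hν ▸ min_le_right _ _)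
      (mul_le_of_le_div₀ (hδ 0).le (norm_nonneg _) (hν ▸ min_le_left _ _)) (fun j hj => ?_)
      (fun j => ?_) k
    · rw [(hupd j).1 (successful_of_le_mul_norm_gradient hdiff hlip hL.le hη hζ.le (hδ j)
        (hacc j) (hsd j) (hμ ▸ hj))]
      linarith [hδ j]
    · by_cases hj : η * δ j ≤ ‖ghat j‖ ∧ f (x (j + 1)) ≤ f (x j) - η * δ j ^ 2
      · linarith [(hupd j).1 hj, hδ j]
      · linarith [(hupd j).2 hj]
  have hm : 0 ≤ m := Finset.le_inf' _ _ fun _ _ => norm_nonneg _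
  refine ⟨by linarith [hk.2], ?_⟩
  calc η * ν ^ 2 * m ^ 2 = η * (ν * m) ^ 2 := by ring
    _ ≤ η * δ k ^ 2 := by gcongr
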